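/- The derivative z′(β) of z(β) = log Z(β) satisfies 0 ≤ z′(β) ≤ n for every real β. Moreover, if α ≥ βmin and Z(α) ≥ e²·Z(βmin), then z′(α) ≥ 1 − e^{−2}. Consequently, if βmin ≤ α ≤ βmax and Z(α) ≥ e²·Z(βmin), then z′(βmax) ≤ 2n·z′(α). -/

import Mathlib

/-!
`z' = M/Z`, where `M(β) = ∑ x c(x) e^{βx}` is the unnormalised first moment, so `z'(β)` is a
mean of points of the support and lies in `[0, n]`. Since every nonzero support point is at
least `1`, `Z - c(0) ≤ M`; and `c(0) ≤ Z(βmin) ≤ e^{-2} Z(α)`, so `M(α) ≥ (1 - e^{-2}) Z(α)`.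
The last claim follows from `z'(βmax) ≤ n` and `1 - e^{-2} ≥ 1/2`.
-/

/-- Partition function of a continuous Gibbs distribution with counts `c`
(finite support): `Z(β) = ∑_x c(x)·e^{βx}`. -/
noncomputable def gibbsZ (c : ℝ → ℝ) (hc : (Function.support c).Finite) (β : ℝ) : ℝ :=
  ∑ x ∈ hc.toFinset, c x * Real.exp (β * x)

/-- Log partition function `z(β) = log Z(β)`. -/
noncomputable def gibbsLogZ (c : ℝ → ℝ) (hc : (Function.support c).Finite) (β : ℝ) : ℝ :=
  Real.log (gibbsZ c hc β)

open Real

noncomputable def gibbsMoment (c : ℝ → ℝ) (hc : (Function.support c).Finite) (β : ℝ) : ℝ :=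
  ∑ x ∈ hc.toFinset, x * (c x * exp (β * x))

section Gibbs

variable {c : ℝ → ℝ} {hc : (Function.support c).Finite}

theorem hasDerivAt_gibbsZ (β : ℝ) : HasDerivAt (gibbsZ c hc) (gibbsMoment c hc β) β := by
  unfold gibbsZ gibbsMoment
  refine HasDerivAt.fun_sum fun x _ => ?_
  simpa [mul_comm, mul_left_comm] using ((hasDerivAt_id β).mul_const x).exp.const_mul (c x)

theorem mul_exp_le_gibbsZ (hnonneg : ∀ x, 0 ≤ c x) (β x : ℝ) :
    c x * exp (β * x) ≤ gibbsZ c hc β := by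
  by_cases hx : c x = 0
  · rw [hx, zero_mul]
    exact Finset.sum_nonneg fun y _ => mul_nonneg (hnonneg y) (exp_pos _).le
  · exact Finset.single_le_sum (f := fun y => c y * exp (β * y))
      (fun y _ => mul_nonneg (hnonneg y) (exp_pos _).le) (hc.mem_toFinset.mpr hx)

theorem gibbsZ_pos (hnonneg : ∀ x, 0 ≤ c x) (hne : c ≠ 0) (β : ℝ) : 0 < gibbsZ c hc β := by
  obtain ⟨x, hx⟩ := Function.ne_iff.mp hne
  exact (mul_pos ((hnonneg x).lt_of_ne' hx) (exp_pos _)).trans_le (mul_exp_le_gibbsZ hnonneg β x)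

theorem deriv_gibbsLogZ (hnonneg : ∀ x, 0 ≤ c x) (hne : c ≠ 0) (β : ℝ) :
    deriv (gibbsLogZ c hc) β = gibbsMoment c hc β / gibbsZ c hc β :=
  ((hasDerivAt_gibbsZ β).log (gibbsZ_pos hnonneg hne β).ne').deriv

theorem mul_gibbsZ_le_gibbsMoment (hnonneg : ∀ x, 0 ≤ c x) {a : ℝ}
    (ha : ∀ x ∈ Function.support c, a ≤ x) (β : ℝ) :
    a * gibbsZ c hc β ≤ gibbsMoment c hc β := by
  rw [gibbsZ, Finset.mul_sum]
  exact Finset.sum_le_sum fun x hx =>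
    mul_le_mul_of_nonneg_right (ha x (hc.mem_toFinset.mp hx)) (mul_nonneg (hnonneg x) (exp_pos _).le)

theorem gibbsMoment_le_mul_gibbsZ (hnonneg : ∀ x, 0 ≤ c x) {b : ℝ}
    (hb : ∀ x ∈ Function.support c, x ≤ b) (β : ℝ) :
    gibbsMoment c hc β ≤ b * gibbsZ c hc β := by
  rw [gibbsZ, Finset.mul_sum]
  exact Finset.sum_le_sum fun x hx =>
    mul_le_mul_of_nonneg_right (hb x (hc.mem_toFinset.mp hx)) (mul_nonneg (hnonneg x) (exp_pos _).le)

theorem gibbsZ_sub_le_gibbsMoment (hnonneg : ∀ x, 0 ≤ c x)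
    (hgap : ∀ x ∈ Function.support c, x ≠ 0 → 1 ≤ x) (β : ℝ) :
    gibbsZ c hc β - c 0 ≤ gibbsMoment c hc β := by
  have hatom : ∑ x ∈ hc.toFinset, (if x = 0 then c x else 0) = c 0 := by
    rw [Finset.sum_ite_eq']
    split_ifs with h0
    · rfl
    · simpa [eq_comm] using h0
  have hterm : ∀ x ∈ hc.toFinset,
      c x * exp (β * x) ≤ x * (c x * exp (β * x)) + if x = 0 then c x else 0 := by
    intro x hx
    split_ifs with h0
    · simp [h0]
    · simpa using mul_le_mul_of_nonneg_right (hgap x (hc.mem_toFinset.mp hx) h0)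
        (mul_nonneg (hnonneg x) (exp_pos (β * x)).le)
  have := Finset.sum_le_sum hterm
  rw [Finset.sum_add_distrib, hatom] at this
  unfold gibbsZ gibbsMoment
  linarith

theorem le_deriv_gibbsLogZ (hnonneg : ∀ x, 0 ≤ c x) (hne : c ≠ 0) {a : ℝ}
    (ha : ∀ x ∈ Function.support c, a ≤ x) (β : ℝ) : a ≤ deriv (gibbsLogZ c hc) β := by
  rw [deriv_gibbsLogZ hnonneg hne, le_div_iff₀ (gibbsZ_pos hnonneg hne β)]
  exact mul_gibbsZ_le_gibbsMoment hnonneg ha β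

theorem deriv_gibbsLogZ_le (hnonneg : ∀ x, 0 ≤ c x) (hne : c ≠ 0) {b : ℝ}
    (hb : ∀ x ∈ Function.support c, x ≤ b) (β : ℝ) : deriv (gibbsLogZ c hc) β ≤ b := by
  rw [deriv_gibbsLogZ hnonneg hne, div_le_iff₀ (gibbsZ_pos hnonneg hne β)]
  exact gibbsMoment_le_mul_gibbsZ hnonneg hb β

theorem one_sub_exp_neg_le_deriv_gibbsLogZ (hnonneg : ∀ x, 0 ≤ c x) (hne : c ≠ 0)
    (hgap : ∀ x ∈ Function.support c, x ≠ 0 → 1 ≤ x) {t β α : ℝ}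
    (hZ : exp t * gibbsZ c hc β ≤ gibbsZ c hc α) :
    1 - exp (-t) ≤ deriv (gibbsLogZ c hc) α := by
  rw [deriv_gibbsLogZ hnonneg hne, le_div_iff₀ (gibbsZ_pos hnonneg hne α)]
  have hatom : c 0 ≤ gibbsZ c hc β := by simpa using mul_exp_le_gibbsZ (hc := hc) hnonneg β 0
  have hβα : gibbsZ c hc β ≤ exp (-t) * gibbsZ c hc α := by
    rw [exp_neg, ← div_eq_inv_mul, le_div_iff₀' (exp_pos t)]
    exact hZ
  linarith [gibbsZ_sub_le_gibbsMoment (hc := hc) hnonneg hgap α]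

end Gibbs

theorem stmt_8_general (n : ℝ) (hn : 1 ≤ n) (c : ℝ → ℝ) (hc : (Function.support c).Finite)
    (hsupp : Function.support c ⊆ {0} ∪ Set.Icc 1 n)
    (hnonneg : ∀ x, 0 ≤ c x) (hne : c ≠ 0)
    (βmin βmax : ℝ) :
    (∀ β : ℝ, 0 ≤ deriv (gibbsLogZ c hc) β ∧ deriv (gibbsLogZ c hc) β ≤ n)
    ∧ (∀ α : ℝ, βmin ≤ α → Real.exp 2 * gibbsZ c hc βmin ≤ gibbsZ c hc α →
        1 - Real.exp (-2) ≤ deriv (gibbsLogZ c hc) α)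
    ∧ (∀ α : ℝ, βmin ≤ α → α ≤ βmax → Real.exp 2 * gibbsZ c hc βmin ≤ gibbsZ c hc α →
        deriv (gibbsLogZ c hc) βmax ≤ 2 * n * deriv (gibbsLogZ c hc) α) := by
  have hpos : ∀ x ∈ Function.support c, 0 ≤ x := fun x hx => by
    rcases hsupp hx with rfl | h
    exacts [le_rfl, zero_le_one.trans h.1]
  have hle : ∀ x ∈ Function.support c, x ≤ n := fun x hx => by
    rcases hsupp hx with rfl | h
    exacts [zero_le_one.trans hn, h.2]
  have hgap : ∀ x ∈ Function.support c, x ≠ 0 → 1 ≤ x := fun x hx h0 =>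
    ((hsupp hx).resolve_left h0).1
  have hlower : ∀ α, Real.exp 2 * gibbsZ c hc βmin ≤ gibbsZ c hc α →
      1 - Real.exp (-2) ≤ deriv (gibbsLogZ c hc) α := fun α hZ =>
    one_sub_exp_neg_le_deriv_gibbsLogZ hnonneg hne hgap hZ
  have hhalf : Real.exp (-2) ≤ 1 / 2 := by
    rw [exp_neg, inv_le_comm₀ (exp_pos 2) (by norm_num)]
    linarith [add_one_le_exp (2 : ℝ)]
  refine ⟨fun β => ⟨le_deriv_gibbsLogZ hnonneg hne hpos β, deriv_gibbsLogZ_le hnonneg hne hle β⟩,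
    fun α _ hZ => hlower α hZ, fun α _ _ hZ => ?_⟩
  calc deriv (gibbsLogZ c hc) βmax ≤ n := deriv_gibbsLogZ_le hnonneg hne hle βmax
    _ ≤ 2 * n * (1 - Real.exp (-2)) := by nlinarith
    _ ≤ 2 * n * deriv (gibbsLogZ c hc) α :=
      mul_le_mul_of_nonneg_left (hlower α hZ) (by linarith)

/-- The derivative `z′` of `z(β) = log Z(β)` satisfies `0 ≤ z′(β) ≤ n` for all
`β`.  Moreover, if `α ≥ βmin` and `Z(α) ≥ e²·Z(βmin)` then
`z′(α) ≥ 1 − e^{−2}`; consequently, if `βmin ≤ α ≤ βmax` and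
`Z(α) ≥ e²·Z(βmin)`, then `z′(βmax) ≤ 2n·z′(α)`. -/
theorem stmt_8 (n : ℝ) (hn : 1 ≤ n) (c : ℝ → ℝ) (hc : (Function.support c).Finite)
    (hsupp : Function.support c ⊆ {0} ∪ Set.Icc 1 n)
    (hnonneg : ∀ x, 0 ≤ c x) (hne : c ≠ 0)
    (βmin βmax : ℝ) (hββ : βmin ≤ βmax) :
    (∀ β : ℝ, 0 ≤ deriv (gibbsLogZ c hc) β ∧ deriv (gibbsLogZ c hc) β ≤ n)
    ∧ (∀ α : ℝ, βmin ≤ α → Real.exp 2 * gibbsZ c hc βmin ≤ gibbsZ c hc α →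
        1 - Real.exp (-2) ≤ deriv (gibbsLogZ c hc) α)
    ∧ (∀ α : ℝ, βmin ≤ α → α ≤ βmax → Real.exp 2 * gibbsZ c hc βmin ≤ gibbsZ c hc α →
        deriv (gibbsLogZ c hc) βmax ≤ 2 * n * deriv (gibbsLogZ c hc) α) :=
  stmt_8_general n hn c hc hsupp hnonneg hne βmin βmax
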